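/- arXiv:2502.13365 — 11 statements merged into one kernel-verified Lean document; each statement's English description precedes it below -/
import Mathlib

section
/- Let n ≥ 1 be an integer and let a₀,…,a₄, b₀,…,b₃, c₀,…,c₂ be real numbers. Define real polynomials X(x) = Σ_{k=0}^{4} a_k x^k, Y(x) = Σ_{k=0}^{3} b_k x^k, Z(x) = Σ_{k=0}^{2} c_k x^k, and define the operator 𝓗′ on real polynomials p by 𝓗′p = X·p″ + Y·p′ + Z·p. Then 𝓗′ maps every polynomial of degree ≤ n to a polynomial of degree ≤ n if and only if b₃ = −2(n−1)a₄, c₁ = −n((n−1)a₃ + b₂), and c₂ = n(n−1)a₄. -/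
/-!
Multiplying by `X ^ 2` turns the operator into a multiplication on monomials:
`X ^ 2 * 𝓗' (X ^ k) = (k (k - 1) a + k X b + X ^ 2 c) * X ^ k`, so the coefficient of `X ^ (k + i)`
in `𝓗' (X ^ k)` is `k (k - 1) a_{i+2} + k b_{i+1} + c_i`. As `𝓗'` raises degrees by at most two,
`𝓗'` preserves degree `≤ n` iff three of these numbers vanish: those of `X ^ (n + 1)` and
`X ^ (n + 2)` in `𝓗' (X ^ n)` and that of `X ^ (n + 1)` in `𝓗' (X ^ (n - 1))`. This linear
system in `b₃, c₁, c₂` is equivalent to the stated one.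
-/

open Polynomial

namespace Polynomial

variable {R : Type*} [CommRing R]

theorem forall_degree_map_le_iff_X_pow (f : R[X] →ₗ[R] R[X]) (n : ℕ) :
    (∀ p : R[X], p.degree ≤ n → (f p).degree ≤ n) ↔ ∀ k ≤ n, (f (X ^ k)).degree ≤ n := by
  classical
  refine ⟨fun h k hk => h _ ((degree_X_pow_le k).trans (by exact_mod_cast hk)), fun h p hp => ?_⟩
  have hle : degreeLE R n ≤ (degreeLE R n).comap f := by
    conv_lhs => rw [degreeLE_eq_span_X_pow]
    rw [Submodule.span_le]
    intro q hq
    obtain ⟨k, hk, rfl⟩ := Finset.mem_image.1 hq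
    exact mem_degreeLE.2 (h k (Nat.lt_succ_iff.1 (Finset.mem_range.1 hk)))
  exact mem_degreeLE.1 (hle (mem_degreeLE.2 hp))

noncomputable def secondOrderOp (a b c : R[X]) : R[X] →ₗ[R] R[X] :=
  LinearMap.mulLeft R a ∘ₗ derivative ∘ₗ derivative + LinearMap.mulLeft R b ∘ₗ derivative +
    LinearMap.mulLeft R c

variable (a b c : R[X])

@[simp]
theorem secondOrderOp_apply (p : R[X]) :
    secondOrderOp a b c p = a * derivative (derivative p) + b * derivative p + c * p :=
  rfl

theorem X_sq_mul_secondOrderOp_X_pow (k : ℕ) :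
    X ^ 2 * secondOrderOp a b c (X ^ k) =
      (C ((k : R) * (k - 1)) * a + C (k : R) * X * b + X ^ 2 * c) * X ^ k := by
  rcases k with _ | _ | k
  · simp
  · simp only [secondOrderOp_apply, zero_add, pow_one, derivative_X, derivative_one, Nat.cast_one,
      sub_self, mul_zero, map_zero, zero_mul, map_one]
    ring
  · simp only [secondOrderOp_apply, derivative_X_pow_succ, derivative_mul, derivative_natCast,
      derivative_one, map_add, map_mul, map_natCast, map_one, Nat.cast_add,
      Nat.cast_one, add_sub_cancel_right, zero_mul, zero_add, add_zero]
    ring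

def shiftCoeff (k i : ℕ) : R :=
  k * (k - 1) * a.coeff (i + 2) + k * b.coeff (i + 1) + c.coeff i

theorem coeff_secondOrderOp_X_pow (k i : ℕ) :
    (secondOrderOp a b c (X ^ k)).coeff (k + i) = shiftCoeff a b c k i := by
  rw [← coeff_X_pow_mul _ 2, X_sq_mul_secondOrderOp_X_pow, show k + i + 2 = i + 2 + k by omega,
    coeff_mul_X_pow]
  simp [shiftCoeff, coeff_X_mul, coeff_X_pow_mul, mul_assoc, sub_mul]

theorem degree_secondOrderOp_X_pow_le_iff {k n : ℕ} (hk : k ≤ n) :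
    (secondOrderOp a b c (X ^ k)).degree ≤ n ↔ ∀ i, n < k + i → shiftCoeff a b c k i = 0 := by
  rw [degree_le_iff_coeff_zero]
  constructor
  · intro h i hi
    rw [← coeff_secondOrderOp_X_pow]
    exact h _ (by exact_mod_cast hi)
  · intro h m hm
    have hnm : n < m := by exact_mod_cast hm
    obtain ⟨i, rfl⟩ := Nat.exists_eq_add_of_le (hk.trans hnm.le)
    rw [coeff_secondOrderOp_X_pow]
    exact h i hnm

variable {a b c}

theorem shiftCoeff_eq_zero (ha : a.natDegree ≤ 4) (hb : b.natDegree ≤ 3) (hc : c.natDegree ≤ 2)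
    (k : ℕ) {i : ℕ} (hi : 3 ≤ i) : shiftCoeff a b c k i = 0 := by
  simp [shiftCoeff, coeff_eq_zero_of_natDegree_lt (ha.trans_lt (by omega : 4 < i + 2)),
    coeff_eq_zero_of_natDegree_lt (hb.trans_lt (by omega : 3 < i + 1)),
    coeff_eq_zero_of_natDegree_lt (hc.trans_lt (by omega : 2 < i))]

theorem forall_shiftCoeff_eq_zero_iff (ha : a.natDegree ≤ 4) (hb : b.natDegree ≤ 3)
    (hc : c.natDegree ≤ 2) (n : ℕ) :
    (∀ k ≤ n + 1, ∀ i, n + 1 < k + i → shiftCoeff a b c k i = 0) ↔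
      shiftCoeff a b c (n + 1) 1 = 0 ∧ shiftCoeff a b c (n + 1) 2 = 0 ∧
        shiftCoeff a b c n 2 = 0 := by
  constructor
  · intro h
    exact ⟨h _ le_rfl 1 (by omega), h _ le_rfl 2 (by omega), h n (by omega) 2 (by omega)⟩
  · rintro ⟨h₁, h₂, h₃⟩ k hk i hi
    obtain hi3 | hi3 := le_or_gt 3 i
    · exact shiftCoeff_eq_zero ha hb hc k hi3
    · obtain ⟨rfl, rfl⟩ | ⟨rfl, rfl⟩ | ⟨rfl, rfl⟩ :
          (k = n + 1 ∧ i = 1) ∨ (k = n + 1 ∧ i = 2) ∨ (k = n ∧ i = 2) := by omega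
      exacts [h₁, h₂, h₃]

theorem secondOrderOp_degree_le_iff (ha : a.natDegree ≤ 4) (hb : b.natDegree ≤ 3)
    (hc : c.natDegree ≤ 2) {n : ℕ} (hn : 1 ≤ n) :
    (∀ p : R[X], p.degree ≤ n → (secondOrderOp a b c p).degree ≤ n) ↔
      b.coeff 3 = -2 * ((n : R) - 1) * a.coeff 4 ∧
        c.coeff 1 = -(n : R) * (((n : R) - 1) * a.coeff 3 + b.coeff 2) ∧
        c.coeff 2 = (n : R) * ((n : R) - 1) * a.coeff 4 := by
  obtain ⟨m, rfl⟩ := Nat.exists_eq_add_of_le' hn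
  rw [forall_degree_map_le_iff_X_pow]
  simp_rw +contextual [degree_secondOrderOp_X_pow_le_iff]
  rw [forall_shiftCoeff_eq_zero_iff ha hb hc]
  simp only [shiftCoeff]
  push_cast
  constructor
  · rintro ⟨h₁, h₂, h₃⟩
    refine ⟨?_, ?_, ?_⟩
    · linear_combination h₂ - h₃
    · linear_combination h₁
    · linear_combination (m + 1 : R) * h₃ - m * h₂
  · rintro ⟨e₁, e₂, e₃⟩
    refine ⟨?_, ?_, ?_⟩
    · linear_combination e₂
    · linear_combination (m + 1 : R) * e₁ + e₃
    · linear_combination (m : R) * e₁ + e₃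

end Polynomial

/-- Theorem 1: the operator `𝓗' p = X p'' + Y p' + Z p`, with `X, Y, Z` of
degrees at most 4, 3, 2, preserves the space of polynomials of degree ≤ n
iff `b₃ = -2(n-1)a₄`, `c₁ = -n((n-1)a₃ + b₂)` and `c₂ = n(n-1)a₄`. -/
theorem sl2_algebraization_iff (n : ℕ) (hn : 1 ≤ n)
    (a₀ a₁ a₂ a₃ a₄ b₀ b₁ b₂ b₃ c₀ c₁ c₂ : ℝ) :
    (∀ p : Polynomial ℝ, p.degree ≤ (n : WithBot ℕ) →
      ((C a₀ + C a₁ * X + C a₂ * X ^ 2 + C a₃ * X ^ 3 + C a₄ * X ^ 4) *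
          derivative (derivative p)
        + (C b₀ + C b₁ * X + C b₂ * X ^ 2 + C b₃ * X ^ 3) * derivative p
        + (C c₀ + C c₁ * X + C c₂ * X ^ 2) * p).degree ≤ (n : WithBot ℕ))
    ↔ (b₃ = -2 * ((n : ℝ) - 1) * a₄
        ∧ c₁ = -(n : ℝ) * (((n : ℝ) - 1) * a₃ + b₂)
        ∧ c₂ = (n : ℝ) * ((n : ℝ) - 1) * a₄) := by
  have h := secondOrderOp_degree_le_iff
    (a := C a₀ + C a₁ * X + C a₂ * X ^ 2 + C a₃ * X ^ 3 + C a₄ * X ^ 4)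
    (b := C b₀ + C b₁ * X + C b₂ * X ^ 2 + C b₃ * X ^ 3) (c := C c₀ + C c₁ * X + C c₂ * X ^ 2)
    (by compute_degree) (by compute_degree) (by compute_degree) hn
  simpa using h
end

section
/- Let n be a nonnegative integer and a₀,…,a₄, b₀,…,b₃, c₀,…,c₂ real numbers satisfying b₃ = −2(n−1)a₄, c₁ = −n((n−1)a₃ + b₂), c₂ = n(n−1)a₄. Set X(x) = Σ_{k=0}^{4} a_k x^k, Y(x) = Σ_{k=0}^{3} b_k x^k, Z(x) = Σ_{k=0}^{2} c_k x^k. Then for every twice continuously differentiable function y : ℝ → ℝ and every x ∈ ℝ, X(x)y″(x) + Y(x)y′(x) + Z(x)y(x) = a₄(J⁺J⁺y)(x) − a₃(J⁺J⁰y)(x) + a₂(J⁰J⁰y)(x) + a₁(J⁰J⁻y)(x) + a₀(J⁻J⁻y)(x) − ((3n−2)/2·a₃ + b₂)(J⁺y)(x) + ((n−1)a₂ + b₁)(J⁰y)(x) + (n/2·a₁ + b₀)(J⁻y)(x) + ((n/2)·((n/2 − 1)a₂ + b₁) + c₀)·y(x). -/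
/-! Since `J⁺`, `J⁰`, `J⁻` are first-order operators with polynomial coefficients, the right-hand
side expands (product rule) to `P y'' + Q y' + R y` with explicit polynomials `P`, `Q`, `R`.
One has `P = X`, and `Q = Y`, `R = Z` up to the `x³ y'`, `x y` and `x² y` terms; the three
algebraization conditions say exactly that these coefficients agree too. -/

/-- `(J⁺y)(x) = -x²y'(x) + n x y(x)` -/
noncomputable def Jp (n : ℕ) (y : ℝ → ℝ) : ℝ → ℝ :=
  fun x => -x ^ 2 * deriv y x + (n : ℝ) * x * y x

/-- `(J⁰y)(x) = x y'(x) - (n/2) y(x)` -/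
noncomputable def J0 (n : ℕ) (y : ℝ → ℝ) : ℝ → ℝ :=
  fun x => x * deriv y x - ((n : ℝ) / 2) * y x

/-- `(J⁻y)(x) = y'(x)` -/
noncomputable def Jm (y : ℝ → ℝ) : ℝ → ℝ := fun x => deriv y x

section Derivatives

variable {n : ℕ} {y : ℝ → ℝ} {x : ℝ}

theorem Jp_apply : Jp n y x = -x ^ 2 * deriv y x + (n : ℝ) * x * y x := rfl

theorem J0_apply : J0 n y x = x * deriv y x - ((n : ℝ) / 2) * y x := rfl

theorem Jm_eq_deriv : Jm y = deriv y := rfl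

theorem deriv_Jp (hy : DifferentiableAt ℝ y x) (hy' : DifferentiableAt ℝ (deriv y) x) :
    deriv (Jp n y) x
      = -x ^ 2 * deriv (deriv y) x + ((n : ℝ) - 2) * x * deriv y x + (n : ℝ) * y x := by
  have h : HasDerivAt (Jp n y) _ x := (((hasDerivAt_pow 2 x).neg.mul hy'.hasDerivAt).add
    (((hasDerivAt_id x).const_mul (n : ℝ)).mul hy.hasDerivAt))
  rw [h.deriv]
  simp only [Pi.neg_apply, id]
  ring

theorem deriv_J0 (hy : DifferentiableAt ℝ y x) (hy' : DifferentiableAt ℝ (deriv y) x) :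
    deriv (J0 n y) x = x * deriv (deriv y) x + (1 - (n : ℝ) / 2) * deriv y x := by
  have h : HasDerivAt (J0 n y) _ x := ((hasDerivAt_id x).mul hy'.hasDerivAt).sub (hy.hasDerivAt.const_mul ((n : ℝ) / 2))
  rw [h.deriv]
  simp only [id]
  ring

end Derivatives

/-- The sl(2) representation of the QES operator `𝓗' = X d²/dx² + Y d/dx + Z`
under the algebraization conditions of Theorem 1. -/
theorem sl2_representation (n : ℕ) (a₀ a₁ a₂ a₃ a₄ b₀ b₁ b₂ b₃ c₀ c₁ c₂ : ℝ)
    (hb₃ : b₃ = -2 * ((n : ℝ) - 1) * a₄)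
    (hc₁ : c₁ = -(n : ℝ) * (((n : ℝ) - 1) * a₃ + b₂))
    (hc₂ : c₂ = (n : ℝ) * ((n : ℝ) - 1) * a₄)
    (y : ℝ → ℝ) (hy : ContDiff ℝ 2 y) (x : ℝ) :
    (a₀ + a₁ * x + a₂ * x ^ 2 + a₃ * x ^ 3 + a₄ * x ^ 4) * deriv (deriv y) x
      + (b₀ + b₁ * x + b₂ * x ^ 2 + b₃ * x ^ 3) * deriv y x
      + (c₀ + c₁ * x + c₂ * x ^ 2) * y x
    = a₄ * Jp n (Jp n y) x - a₃ * Jp n (J0 n y) x + a₂ * J0 n (J0 n y) x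
      + a₁ * J0 n (Jm y) x + a₀ * Jm (Jm y) x
      - ((3 * (n : ℝ) - 2) / 2 * a₃ + b₂) * Jp n y x
      + (((n : ℝ) - 1) * a₂ + b₁) * J0 n y x
      + ((n : ℝ) / 2 * a₁ + b₀) * Jm y x
      + (((n : ℝ) / 2) * (((n : ℝ) / 2 - 1) * a₂ + b₁) + c₀) * y x := by
  have hy₁ : DifferentiableAt ℝ y x := hy.differentiable (by norm_num) x
  have hy₂ : DifferentiableAt ℝ (deriv y) x :=
    (contDiff_succ_iff_deriv.mp hy).2.2.differentiable one_ne_zero x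
  simp only [Jm_eq_deriv, Jp_apply, J0_apply, deriv_Jp hy₁ hy₂, deriv_J0 hy₁ hy₂, hb₃, hc₁, hc₂]
  ring
end

section
/- Let n be a nonnegative integer, m an integer, and ω_L > 0. Then for every twice continuously differentiable function y : ℝ → ℝ and every x ∈ ℝ, x·y″(x) + (−2ω_L x² + 2|m| + 1)·y′(x) + 2ω_L n·x·y(x) = (J⁰J⁻y)(x) + 2ω_L·(J⁺y)(x) + (n/2 + 2|m| + 1)·(J⁻y)(x). -/
/-- sl(2) algebraization of the Stäckel-transformed Hamiltonian of the 2D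
hydrogen atom in a uniform magnetic field:
`𝓗' = J⁰J⁻ + 2ω_L J⁺ + (n/2 + 2|m| + 1) J⁻`. -/
theorem hydrogen2D_sl2 (n : ℕ) (m : ℤ) (ωL : ℝ) (hω : 0 < ωL)
    (y : ℝ → ℝ) (hy : ContDiff ℝ 2 y) (x : ℝ) :
    x * deriv (deriv y) x + (-2 * ωL * x ^ 2 + 2 * |(m : ℝ)| + 1) * deriv y x
      + 2 * ωL * (n : ℝ) * x * y x
    = J0 n (Jm y) x + 2 * ωL * Jp n y x
      + ((n : ℝ) / 2 + 2 * |(m : ℝ)| + 1) * Jm y x := by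
  simp only [J0, Jp, Jm]
  have h2 : Jm y = deriv y := rfl
  rw [h2]
  ring
end

section
/- Let m be an integer, ω_L > 0, σ ∈ {+1, −1}, and set c = √((2|m|+1)/(2ω_L)), Z = σ·√(2(2|m|+1)·ω_L), and y(r) = r + σ·c. Then for every r ∈ ℝ, r·y″(r) + (−2ω_L r² + 2|m| + 1)·y′(r) + 2ω_L·r·y(r) = Z·y(r). -/
/-- n = 1 QES sector of the 2D hydrogen atom in a uniform magnetic field:
the Stäckel-transformed operator has eigenvalues `Z = ±√(2(2|m|+1)ω_L)` with
eigenfunctions `y = r ± √((2|m|+1)/(2ω_L))`. -/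
theorem hydrogen2D_n1 (m : ℤ) (ωL : ℝ) (hω : 0 < ωL) (σ : ℝ)
    (hσ : σ = 1 ∨ σ = -1)
    (c Z : ℝ) (hc : c = Real.sqrt ((2 * |(m : ℝ)| + 1) / (2 * ωL)))
    (hZ : Z = σ * Real.sqrt (2 * (2 * |(m : ℝ)| + 1) * ωL))
    (y : ℝ → ℝ) (hy : y = fun r => r + σ * c) (r : ℝ) :
    r * deriv (deriv y) r + (-2 * ωL * r ^ 2 + 2 * |(m : ℝ)| + 1) * deriv y r
      + 2 * ωL * r * y r = Z * y r := by
  set A : ℝ := 2 * |(m : ℝ)| + 1 with hA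
  have hApos : (0:ℝ) < A := by positivity
  have hd1 : deriv y = fun _ => (1:ℝ) := by
    subst hy; funext x
    simp [deriv_add_const]
  have hd2 : deriv (deriv y) = fun _ => (0:ℝ) := by
    rw [hd1]; funext x; simp
  have hsq : Real.sqrt (2 * A * ωL) * Real.sqrt (A / (2 * ωL)) = A := by
    rw [← Real.sqrt_mul (by positivity)]
    have : 2 * A * ωL * (A / (2 * ωL)) = A ^ 2 := by field_simp
    rw [this, Real.sqrt_sq hApos.le]
  have h2 : 2 * ωL * Real.sqrt (A / (2 * ωL)) = Real.sqrt (2 * A * ωL) := by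
    have : 2 * A * ωL = (2 * ωL) ^ 2 * (A / (2 * ωL)) := by field_simp
    rw [this, Real.sqrt_mul (by positivity), Real.sqrt_sq (by positivity)]
  rw [hd2, hd1, hy, hZ, hc]
  simp only [hA] at hsq h2
  rcases hσ with h | h <;> subst h
  · linear_combination r * h2 - hsq
  · linear_combination -r * h2 - hsq
end

section
/- Let m be an integer, ω_L > 0, σ ∈ {+1, −1}, and set Z = σ·√(2(2|m|+1)·ω_L), E = (m + |m| + 2)·ω_L, and u(r) = r^{|m|+1/2}·e^{−ω_L r²/2}·(r + σ·√((2|m|+1)/(2ω_L))). Then for every r > 0, −u″(r) + ((m² − 1/4)/r² + ω_L² r² + Z/r)·u(r) = 2(E − m·ω_L)·u(r). -/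
/-!
With `p = |m| + 1/2` and `u = r ^ p * exp (-ω r² / 2) * v`, the Gaussian-power factor absorbs
both the centrifugal term (`p (p - 1) = m² - 1/4`) and the oscillator term `ω² r²`. For
`v = r + c` what is left of the equation is `Z = 2 ω c` and `2 ω c² = 2 |m| + 1`, and these two
relations are exactly what the choices of `Z` and `c = σ √((2|m|+1)/(2ω))` provide.
-/

open Real

lemma hasDerivAt_rpow_mul_exp (p ω : ℝ) {x : ℝ} (hx : 0 < x) :
    HasDerivAt (fun y => y ^ p * exp (-ω * y ^ 2 / 2))
      ((p / x - ω * x) * (x ^ p * exp (-ω * x ^ 2 / 2))) x := by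
  have hpow : HasDerivAt (fun y => y ^ p) (p * x ^ (p - 1)) x :=
    hasDerivAt_rpow_const (Or.inl hx.ne')
  have hexp : HasDerivAt (fun y => exp (-ω * y ^ 2 / 2)) (-ω * x * exp (-ω * x ^ 2 / 2)) x :=
    (((hasDerivAt_pow 2 x).const_mul (-ω)).div_const 2).exp.congr_deriv (by ring)
  refine (hpow.fun_mul hexp).congr_deriv ?_
  rw [rpow_sub_one hx.ne']
  ring

lemma deriv_deriv_rpow_mul_exp_mul (p ω : ℝ) {v v' : ℝ → ℝ} {v'' r : ℝ} (hr : 0 < r)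
    (hv : ∀ x, 0 < x → HasDerivAt v (v' x) x) (hv' : HasDerivAt v' v'' r) :
    deriv (deriv fun x => x ^ p * exp (-ω * x ^ 2 / 2) * v x) r
      = r ^ p * exp (-ω * r ^ 2 / 2) * (v'' + 2 * (p / r - ω * r) * v' r
          + (p * (p - 1) / r ^ 2 + ω ^ 2 * r ^ 2 - (2 * p + 1) * ω) * v r) := by
  have hderiv : deriv (fun x => x ^ p * exp (-ω * x ^ 2 / 2) * v x) =ᶠ[nhds r]
      fun x => x ^ p * exp (-ω * x ^ 2 / 2) * ((p / x - ω * x) * v x + v' x) := by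
    filter_upwards [Ioi_mem_nhds hr] with x hx
    rw [((hasDerivAt_rpow_mul_exp p ω hx).fun_mul (hv x hx)).deriv]
    ring
  have hcoef : HasDerivAt (fun x => p / x - ω * x) (-p / r ^ 2 - ω) r :=
    (((hasDerivAt_const r p).fun_div (hasDerivAt_id' r) hr.ne').fun_sub
      ((hasDerivAt_id' r).const_mul ω)).congr_deriv (by ring)
  rw [hderiv.deriv_eq, ((hasDerivAt_rpow_mul_exp p ω hr).fun_mul
    ((hcoef.fun_mul (hv r hr)).fun_add hv')).deriv]
  field_simp
  ring

lemma sqrt_two_mul_mul_eq_mul_sqrt_div (k : ℝ) {ω : ℝ} (hω : 0 < ω) :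
    sqrt (2 * k * ω) = 2 * ω * sqrt (k / (2 * ω)) := by
  rw [show 2 * k * ω = (2 * ω) ^ 2 * (k / (2 * ω)) by field_simp,
    sqrt_mul (sq_nonneg _), sqrt_sq (by positivity)]

/-- Exact n = 1 solutions of the radial Schrödinger equation of the 2D
hydrogen atom in a uniform magnetic field, with energy `E = (m+|m|+2)ω_L`
and constraint `Z = ±√(2(2|m|+1)ω_L)`. -/
theorem hydrogen2D_n1_radial (m : ℤ) (ωL : ℝ) (hω : 0 < ωL) (σ : ℝ)
    (hσ : σ = 1 ∨ σ = -1) (Z E : ℝ)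
    (hZ : Z = σ * Real.sqrt (2 * (2 * |(m : ℝ)| + 1) * ωL))
    (hE : E = ((m : ℝ) + |(m : ℝ)| + 2) * ωL)
    (u : ℝ → ℝ)
    (hu : u = fun r : ℝ =>
      r ^ (|(m : ℝ)| + 1 / 2) * Real.exp (-ωL * r ^ 2 / 2) *
        (r + σ * Real.sqrt ((2 * |(m : ℝ)| + 1) / (2 * ωL))))
    (r : ℝ) (hr : 0 < r) :
    -deriv (deriv u) r
      + (((m : ℝ) ^ 2 - 1 / 4) / r ^ 2 + ωL ^ 2 * r ^ 2 + Z / r) * u r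
    = 2 * (E - (m : ℝ) * ωL) * u r := by
  set c := σ * sqrt ((2 * |(m : ℝ)| + 1) / (2 * ωL))
  have hZc : Z = 2 * ωL * c := by rw [hZ, sqrt_two_mul_mul_eq_mul_sqrt_div _ hω]; ring
  have hc : 2 * ωL * c ^ 2 = 2 * |(m : ℝ)| + 1 := by
    have hσ2 : σ ^ 2 = 1 := by rcases hσ with rfl | rfl <;> norm_num
    rw [mul_pow, hσ2, sq_sqrt (by positivity)]
    field_simp
  clear_value c
  subst hu
  rw [deriv_deriv_rpow_mul_exp_mul _ _ hr (v' := fun _ => 1) (v'' := 0)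
      (fun x _ => (hasDerivAt_id' x).add_const c) (hasDerivAt_const r 1),
    hZc, hE, ← sq_abs (m : ℝ)]
  field_simp
  linear_combination (16 * r) * hc
end

section
/- Let l be a nonnegative integer, ω > 0, σ ∈ {+1, −1}, and set Z = 2σ·√((l+1)·ω), ε = (5 + 2l)·ω, and u(r) = r^{l+1}·e^{−ω r²/2}·(r + σ·√((l+1)/ω)). Then for every r > 0, −u″(r) + (ω² r² + Z/r + l(l+1)/r²)·u(r) = ε·u(r). -/
/-!
Write `u = φ g` with `φ r = r ^ (l + 1) * exp (-ω r² / 2)`. Then `φ' / φ = (l + 1) / r - ω r`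
and `φ'' / φ = l (l + 1) / r² + ω² r² - (2l + 3) ω`, so the centrifugal and oscillator terms
cancel and the operator acts on `g` as `-g'' - 2 ((l + 1) / r - ω r) g' + (2l + 3) ω g`.
For `g r = r + c` this, together with the Coulomb term `Z (r + c) / r`, equals
`(2l + 5) ω (r + c)` exactly when `Z = 2 ω c` and `ω c² = l + 1`; the choice
`c = σ √((l + 1) / ω)` meets both.
-/

open Real Filter Topology

noncomputable def radialGaussian (l : ℕ) (ω x : ℝ) : ℝ := x ^ (l + 1) * exp (-ω * x ^ 2 / 2)

theorem hasDerivAt_radialGaussian (l : ℕ) (ω : ℝ) {x : ℝ} (hx : x ≠ 0) :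
    HasDerivAt (radialGaussian l ω) (((l + 1) / x - ω * x) * radialGaussian l ω x) x := by
  have hexp : HasDerivAt (fun y : ℝ => -ω * y ^ 2 / 2) (-(ω * x)) x :=
    (((hasDerivAt_pow 2 x).const_mul (-ω)).div_const 2).congr_deriv (by push_cast; ring)
  refine ((hasDerivAt_pow (l + 1) x).mul hexp.exp).congr_deriv ?_
  rw [radialGaussian, pow_succ]
  field_simp
  push_cast
  ring

theorem neg_deriv_deriv_radialGaussian_mul (l : ℕ) (ω : ℝ) {g g' : ℝ → ℝ} {g'' r : ℝ}
    (hg : ∀ᶠ x in 𝓝 r, HasDerivAt g (g' x) x) (hg' : HasDerivAt g' g'' r) (hr : r ≠ 0) :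
    -deriv (deriv fun x => radialGaussian l ω x * g x) r
        + (ω ^ 2 * r ^ 2 + l * (l + 1) / r ^ 2) * (radialGaussian l ω r * g r)
      = radialGaussian l ω r
          * ((2 * l + 3) * ω * g r - 2 * ((l + 1) / r - ω * r) * g' r - g'') := by
  have hderiv : deriv (fun x => radialGaussian l ω x * g x)
      =ᶠ[𝓝 r] fun x =>
        ((l + 1) / x - ω * x) * radialGaussian l ω x * g x + radialGaussian l ω x * g' x := by
    filter_upwards [hg, isOpen_ne.mem_nhds hr] with x hgx hx
    exact ((hasDerivAt_radialGaussian l ω hx).mul hgx).deriv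
  have hlog : HasDerivAt (fun x : ℝ => (l + 1) / x - ω * x) (-(l + 1) / r ^ 2 - ω) r :=
    (((hasDerivAt_inv hr).const_mul ((l : ℝ) + 1)).sub
      ((hasDerivAt_id r).const_mul ω)).congr_deriv (by ring)
  have hφ := hasDerivAt_radialGaussian l ω hr
  have hsum : HasDerivAt (fun x =>
      ((l + 1) / x - ω * x) * radialGaussian l ω x * g x + radialGaussian l ω x * g' x) _ r :=
    ((hlog.mul hφ).mul hg.self_of_nhds).add (hφ.mul hg')
  rw [hderiv.deriv_eq, hsum.deriv, Pi.mul_apply]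
  field_simp
  ring

theorem radialGaussian_mul_linear_eigen (l : ℕ) {ω c Z r : ℝ} (hc : ω * c ^ 2 = l + 1)
    (hZ : Z = 2 * ω * c) (hr : r ≠ 0) :
    -deriv (deriv fun x => radialGaussian l ω x * (x + c)) r
        + (ω ^ 2 * r ^ 2 + Z / r + l * (l + 1) / r ^ 2) * (radialGaussian l ω r * (r + c))
      = (5 + 2 * l) * ω * (radialGaussian l ω r * (r + c)) := by
  have key := neg_deriv_deriv_radialGaussian_mul l ω (g := (· + c)) (g' := fun _ => 1)
    (.of_forall fun x => (hasDerivAt_id x).add_const c) (hasDerivAt_const r 1) hr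
  subst hZ
  linear_combination (norm := skip) key
  field_simp
  linear_combination 2 * r * radialGaussian l ω r * hc

theorem Real.sqrt_mul_eq_mul_sqrt_div (a : ℝ) {b : ℝ} (hb : 0 < b) :
    √(a * b) = b * √(a / b) := by
  rw [show a * b = a / b * b ^ 2 by field_simp, Real.sqrt_mul' _ (sq_nonneg b),
    Real.sqrt_sq hb.le, mul_comm]

/-- Exact n = 1 solutions of the Hooke atom (two electrons in an external
oscillator potential): energy `ε = (5+2l)ω` under `Z = ±2√((l+1)ω)`. -/
theorem hooke_oscillator_n1 (l : ℕ) (ω : ℝ) (hω : 0 < ω) (σ : ℝ)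
    (hσ : σ = 1 ∨ σ = -1) (Z ε : ℝ)
    (hZ : Z = 2 * σ * Real.sqrt (((l : ℝ) + 1) * ω))
    (hε : ε = (5 + 2 * (l : ℝ)) * ω)
    (u : ℝ → ℝ)
    (hu : u = fun r : ℝ =>
      r ^ (l + 1) * Real.exp (-ω * r ^ 2 / 2) *
        (r + σ * Real.sqrt (((l : ℝ) + 1) / ω)))
    (r : ℝ) (hr : 0 < r) :
    -deriv (deriv u) r
      + (ω ^ 2 * r ^ 2 + Z / r + (l : ℝ) * ((l : ℝ) + 1) / r ^ 2) * u r
    = ε * u r := by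
  set c := σ * √(((l : ℝ) + 1) / ω)
  have hσ2 : σ ^ 2 = 1 := by rcases hσ with rfl | rfl <;> norm_num
  have hc : ω * c ^ 2 = l + 1 := by
    rw [mul_pow, hσ2, one_mul, Real.sq_sqrt (by positivity)]
    field_simp
  have hZc : Z = 2 * ω * c := by rw [hZ, Real.sqrt_mul_eq_mul_sqrt_div _ hω]; ring
  subst hu hε
  exact radialGaussian_mul_linear_eigen l hc hZc hr.ne'
end

section
/- Let l be a nonnegative integer and ω > 0. (i) The function y₁(r) = r² − (3+2l)/(2ω) satisfies r·y₁″(r) + (−2ω r² + 2(l+1))·y₁′(r) + 4ω·r·y₁(r) = 0 for all r ∈ ℝ. (ii) For σ ∈ {+1, −1}, the function y(r) = r² + σ·√((5+4l)/ω)·r + (l+1)/ω satisfies r·y″(r) + (−2ω r² + 2(l+1))·y′(r) + 4ω·r·y(r) = Z·y(r) for all r ∈ ℝ, where Z = 2σ·√((5+4l)·ω). -/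
/-!
The operator `r y'' + (-2ωr² + 2(l+1)) y' + 4ωr y` maps the monic quadratic `r² + a r + c` to
`2ωa r² + (4l + 6 + 4ωc) r + 2(l+1)a`: the cubic terms cancel. So `r² + a r + c` is an
eigenfunction with eigenvalue `Z` exactly when `Z = 2ωa`, `Z a = 4l + 6 + 4ωc` and
`Z c = 2(l+1)a`. For `Z = 0` this forces `a = 0`, `c = -(3+2l)/(2ω)`; otherwise eliminating `c`
gives `2ωa² = 2(5+4l)`, i.e. `a = ±√((5+4l)/ω)`, `c = (l+1)/ω` and `Z = ±2√((5+4l)ω)`.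
-/

open Real

/-- The Stäckel-transformed Hooke operator in the sector `n = 2`. -/
noncomputable def hookeOp (ω l : ℝ) (y : ℝ → ℝ) (r : ℝ) : ℝ :=
  r * deriv (deriv y) r + (-2 * ω * r ^ 2 + 2 * (l + 1)) * deriv y r + 4 * ω * r * y r

lemma deriv_monic_quadratic (a c : ℝ) :
    deriv (fun r : ℝ => r ^ 2 + a * r + c) = fun r => 2 * r + a := by
  funext r
  have h := ((hasDerivAt_pow 2 r).add ((hasDerivAt_id r).const_mul a)).add_const c
  simpa using h.deriv

lemma deriv_deriv_monic_quadratic (a c r : ℝ) :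
    deriv (deriv (fun r : ℝ => r ^ 2 + a * r + c)) r = 2 := by
  rw [deriv_monic_quadratic]
  simp

lemma hookeOp_monic_quadratic (ω l a c r : ℝ) :
    hookeOp ω l (fun r => r ^ 2 + a * r + c) r
      = 2 * ω * a * r ^ 2 + (4 * l + 6 + 4 * ω * c) * r + 2 * (l + 1) * a := by
  rw [hookeOp, deriv_deriv_monic_quadratic, deriv_monic_quadratic]
  ring

lemma hookeOp_monic_quadratic_eq_mul {ω l a c Z : ℝ} (hZ : Z = 2 * ω * a)
    (ha : Z * a = 4 * l + 6 + 4 * ω * c) (hc : Z * c = 2 * (l + 1) * a) (r : ℝ) :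
    hookeOp ω l (fun r => r ^ 2 + a * r + c) r = Z * (r ^ 2 + a * r + c) := by
  rw [hookeOp_monic_quadratic]
  linear_combination (-r ^ 2) * hZ - r * ha - hc

lemma mul_sqrt_div_self {ω : ℝ} (hω : 0 < ω) (x : ℝ) : ω * √(x / ω) = √(x * ω) := calc
  ω * √(x / ω) = √(ω ^ 2) * √(x / ω) := by rw [sqrt_sq hω.le]
  _ = √(ω ^ 2 * (x / ω)) := (sqrt_mul (sq_nonneg ω) _).symm
  _ = √(x * ω) := by congr 1; field_simp

/-- n = 2 QES sector of the Hooke atom: eigenvalues `Z₁ = 0` and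
`Z_{2,3} = ±2√((5+4l)ω)` of the Stäckel-transformed operator, with quadratic
polynomial eigenfunctions. -/
theorem hooke_oscillator_n2 (l : ℕ) (ω : ℝ) (hω : 0 < ω) :
    (∀ y₁ : ℝ → ℝ, y₁ = (fun r : ℝ => r ^ 2 - (3 + 2 * (l : ℝ)) / (2 * ω)) →
      ∀ r : ℝ,
        r * deriv (deriv y₁) r
          + (-2 * ω * r ^ 2 + 2 * ((l : ℝ) + 1)) * deriv y₁ r
          + 4 * ω * r * y₁ r = 0)
    ∧ (∀ σ : ℝ, σ = 1 ∨ σ = -1 →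
        ∀ y : ℝ → ℝ, y = (fun r : ℝ =>
          r ^ 2 + σ * Real.sqrt ((5 + 4 * (l : ℝ)) / ω) * r + ((l : ℝ) + 1) / ω) →
        ∀ r : ℝ,
          r * deriv (deriv y) r
            + (-2 * ω * r ^ 2 + 2 * ((l : ℝ) + 1)) * deriv y r
            + 4 * ω * r * y r
          = (2 * σ * Real.sqrt ((5 + 4 * (l : ℝ)) * ω)) * y r) := by
  constructor
  · rintro y₁ rfl r
    have hy₁ : (fun r : ℝ => r ^ 2 - (3 + 2 * (l : ℝ)) / (2 * ω))
        = fun r => r ^ 2 + 0 * r + -((3 + 2 * (l : ℝ)) / (2 * ω)) := by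
      funext r; ring
    change hookeOp ω l _ r = 0
    rw [hy₁, hookeOp_monic_quadratic_eq_mul (Z := 0) (by ring) (by field_simp; ring) (by ring),
      zero_mul]
  · rintro σ hσ y rfl r
    have hs : ω * √((5 + 4 * (l : ℝ)) / ω) ^ 2 = 5 + 4 * l := by
      rw [sq_sqrt (by positivity)]
      field_simp
    have hσ2 : σ ^ 2 = 1 := by rcases hσ with rfl | rfl <;> norm_num
    have hc : ω * (((l : ℝ) + 1) / ω) = l + 1 := mul_div_cancel₀ _ hω.ne'
    rw [← mul_sqrt_div_self hω]
    exact hookeOp_monic_quadratic_eq_mul (by ring)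
      (by linear_combination 2 * σ ^ 2 * hs + 2 * (5 + 4 * (l : ℝ)) * hσ2 - 4 * hc)
      (by field_simp) r
end

section
/- Let γ > 0 and δ > 0, let σ ∈ {+1, −1}, and set R = (1/2)·√(δ/γ), E = γ, and Ψ(u) = σ·(1 + γu)/√(γδ). Then for every u > 0, (u²/(4R²) − 1)·Ψ″(u) + (δu/(4R²) − 1/(γu))·Ψ′(u) + Ψ(u)/u = E·Ψ(u). -/
/-- Exact n = 1 solution for two Coulombically repelling electrons on a
sphere: energy `E = γ` under the radius constraint `R = (1/2)√(δ/γ)`, with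
wavefunction `Ψ(u) = ±(1 + γu)/√(γδ)`. -/
theorem electrons_on_sphere_n1 (γ δ : ℝ) (hγ : 0 < γ) (hδ : 0 < δ)
    (σ : ℝ) (hσ : σ = 1 ∨ σ = -1) (R E : ℝ)
    (hR : R = (1 / 2) * Real.sqrt (δ / γ)) (hE : E = γ)
    (Ψ : ℝ → ℝ)
    (hΨ : Ψ = fun u : ℝ => σ * (1 + γ * u) / Real.sqrt (γ * δ))
    (u : ℝ) (hu : 0 < u) :
    (u ^ 2 / (4 * R ^ 2) - 1) * deriv (deriv Ψ) u
      + (δ * u / (4 * R ^ 2) - 1 / (γ * u)) * deriv Ψ u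
      + Ψ u / u
    = E * Ψ u := by
  have hs : (0:ℝ) < Real.sqrt (γ * δ) := Real.sqrt_pos.mpr (by positivity)
  have hΨ2 : Ψ = fun u : ℝ => σ / Real.sqrt (γ * δ)
      + σ * γ / Real.sqrt (γ * δ) * u := by
    rw [hΨ]; funext x; field_simp
  have hd : deriv Ψ = fun _ : ℝ => σ * γ / Real.sqrt (γ * δ) := by
    rw [hΨ2]; funext x
    rw [deriv_const_add]
    simpa using ((hasDerivAt_id x).const_mul (σ * γ / Real.sqrt (γ * δ))).deriv
  have hdd : deriv (deriv Ψ) u = 0 := by rw [hd]; simp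
  have hR2 : 4 * R ^ 2 = δ / γ := by
    rw [hR]
    rw [mul_pow, Real.sq_sqrt (by positivity : (0:ℝ) ≤ δ / γ)]
    ring
  rw [hdd, hd, hΨ2, hR2, hE]
  have hu' : u ≠ 0 := ne_of_gt hu
  have hγ' : γ ≠ 0 := ne_of_gt hγ
  have hδ' : δ ≠ 0 := ne_of_gt hδ
  have hs' : Real.sqrt (γ * δ) ≠ 0 := ne_of_gt hs
  field_simp
  ring
end

section
/- Let γ > 0 and δ > 0, and set S = 3 + 2δ + γ(2+δ), R = √((3 + 2γ + 2δ + δγ)/(2γ)), E = γ(1+δ)/S, and Ψ(u) = (1 + γu)/(γ(2+δ)) + γu²/(2S). Then for every u > 0, (u²/(4R²) − 1)·Ψ″(u) + (δu/(4R²) − 1/(γu))·Ψ′(u) + Ψ(u)/u = E·Ψ(u). -/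
/-! Ψ is a quadratic polynomial `a + b u + c u²`, so after multiplying the equation by `u` both
sides are cubic polynomials in `u` and it suffices to match their four coefficients. The `u⁰`
coefficient forces `γ a = b`, and the `u³` coefficient forces `E = (1 + δ) / (2 R²)`, which the
radius constraint turns into `γ (1 + δ) / S`; the `u¹` and `u²` coefficients then fix `b` and `c`. -/

section Quadratic

variable {𝕜 : Type*} [NontriviallyNormedField 𝕜] (a b c : 𝕜)

theorem deriv_quadratic :
    deriv (fun x => a + b * x + c * x ^ 2) = fun x => b + 2 * c * x := by
  funext x
  have h := (((hasDerivAt_id' x).const_mul b).const_add a).add ((hasDerivAt_pow 2 x).const_mul c)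
  exact h.deriv.trans (by push_cast; ring)

theorem deriv_deriv_quadratic :
    deriv (deriv (fun x => a + b * x + c * x ^ 2)) = fun _ => 2 * c := by
  rw [deriv_quadratic]
  funext x
  exact (((hasDerivAt_id' x).const_mul (2 * c)).const_add b).deriv.trans (mul_one _)

end Quadratic

theorem quadratic_solves_radial_equation {γ δ R E a b c u : ℝ} (hγ : γ ≠ 0) (hu : u ≠ 0)
    (h₀ : γ * a = b) (h₁ : γ * (b - 2 * c) - 2 * c = γ * E * a)
    (h₂ : δ * b / (4 * R ^ 2) + c = E * b) (h₃ : (1 + δ) / (2 * R ^ 2) = E) :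
    (u ^ 2 / (4 * R ^ 2) - 1) * (2 * c)
      + (δ * u / (4 * R ^ 2) - 1 / (γ * u)) * (b + 2 * c * u)
      + (a + b * u + c * u ^ 2) / u
    = E * (a + b * u + c * u ^ 2) := by
  field_simp
  linear_combination 4 * h₀ + 4 * u * h₁ + 4 * γ * u ^ 2 * h₂ + 4 * c * γ * u ^ 3 * h₃

/-- Physical n = 2 solution for two Coulombically repelling electrons on a
sphere: energy `E = γ(1+δ)/S` with `S = 3 + 2δ + γ(2+δ)`, under the radius
constraint `R² = (3 + 2γ + 2δ + δγ)/(2γ)`. -/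
theorem electrons_on_sphere_n2 (γ δ : ℝ) (hγ : 0 < γ) (hδ : 0 < δ)
    (S R E : ℝ) (hS : S = 3 + 2 * δ + γ * (2 + δ))
    (hR : R = Real.sqrt ((3 + 2 * γ + 2 * δ + δ * γ) / (2 * γ)))
    (hE : E = γ * (1 + δ) / S)
    (Ψ : ℝ → ℝ)
    (hΨ : Ψ = fun u : ℝ => (1 + γ * u) / (γ * (2 + δ)) + γ * u ^ 2 / (2 * S))
    (u : ℝ) (hu : 0 < u) :
    (u ^ 2 / (4 * R ^ 2) - 1) * deriv (deriv Ψ) u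
      + (δ * u / (4 * R ^ 2) - 1 / (γ * u)) * deriv Ψ u
      + Ψ u / u
    = E * Ψ u := by
  have hγ₀ : γ ≠ 0 := hγ.ne'
  have hδ₂ : 2 + δ ≠ 0 := by positivity
  have hS₀ : S ≠ 0 := by rw [hS]; positivity
  have hR₂ : R ^ 2 = (3 + 2 * γ + 2 * δ + δ * γ) / (2 * γ) := by
    rw [hR, Real.sq_sqrt (by positivity)]
  have hΨ_quadratic : Ψ = fun x => 1 / (γ * (2 + δ)) + 1 / (2 + δ) * x + γ / (2 * S) * x ^ 2 := by
    rw [hΨ]; funext x; field_simp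
  rw [hΨ_quadratic, deriv_deriv_quadratic, deriv_quadratic]
  apply quadratic_solves_radial_equation hγ₀ hu.ne'
  · field_simp
  · rw [hE, hS]; field_simp; ring
  · rw [hE, hR₂, hS]; field_simp; ring
  · rw [hE, hR₂, hS]; field_simp; ring
end

section
/- Let d > 0, a ≠ 0 and c real, set κ = 1 + c/√(2d), assume κ + 1 ≠ 0 and κ² − 4a√(2d)/(κ+1) ≥ 0, and set s = √(κ² − 4a√(2d)/(κ+1)). For σ ∈ {+1, −1}, define B = a/(1 + κ), α = κ + σ·s, and f(x) = x − ((κ+1)/(2a))·(−κ + σ·s). Then for every x ∈ ℝ, x²·f″(x) + 2(Bx² + κx + √(2d))·f′(x) − 2B·x·f(x) = α·f(x). -/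
/-!
On the affine function `x + p` the operator acts by `x + p ↦ (2κ - 2Bp) x + 2S`, with
`S = √(2d)`. So `x + p` is an eigenfunction with eigenvalue `α` exactly when `α = 2κ - 2Bp`
and `α p = 2S`; eliminating `p` leaves `α² - 2κα + 4BS = 0`, whose roots are `κ ± s` with
`s² = κ² - 4BS`, and for `B = a/(κ+1)` the matching shift is the `p` of the theorem.
-/

open Real

/-- The Stäckel-transformed operator `𝓗′` in the sector `n = 1`, with `S` in place of `√(2d)`. -/
noncomputable def stackelOp (B κ S : ℝ) (f : ℝ → ℝ) (x : ℝ) : ℝ :=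
  x ^ 2 * deriv (deriv f) x + 2 * (B * x ^ 2 + κ * x + S) * deriv f x - 2 * B * x * f x

theorem stackelOp_add_const (B κ S p x : ℝ) :
    stackelOp B κ S (fun y => y + p) x = (2 * κ - 2 * B * p) * x + 2 * S := by
  have hderiv : deriv (fun y : ℝ => y + p) = fun _ => 1 := by
    funext y
    simp
  simp only [stackelOp, hderiv, deriv_const]
  ring

theorem stackelOp_add_const_eq_mul {B κ S p α : ℝ} (hcoeff : 2 * κ - 2 * B * p = α)
    (hconst : α * p = 2 * S) (x : ℝ) :
    stackelOp B κ S (fun y => y + p) x = α * (x + p) := by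
  rw [stackelOp_add_const]
  linear_combination x * hcoeff - hconst

theorem stackelOp_eigen_of_sq_eq {B κ S s σ : ℝ} (hB : B ≠ 0) (hs : s ^ 2 = κ ^ 2 - 4 * B * S)
    (hσ : σ ^ 2 = 1) (x : ℝ) :
    stackelOp B κ S (fun y => y + (κ - σ * s) / (2 * B)) x
      = (κ + σ * s) * (x + (κ - σ * s) / (2 * B)) := by
  refine stackelOp_add_const_eq_mul ?_ ?_ x
  · field_simp
    ring
  · field_simp
    linear_combination (-s ^ 2) * hσ - hs

theorem inverse_quartic_n1_general (d a : ℝ) (ha : a ≠ 0)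
    (κ : ℝ) (hκ1 : κ + 1 ≠ 0)
    (hnonneg : 0 ≤ κ ^ 2 - 4 * a * Real.sqrt (2 * d) / (κ + 1))
    (s : ℝ) (hs : s = Real.sqrt (κ ^ 2 - 4 * a * Real.sqrt (2 * d) / (κ + 1)))
    (σ : ℝ) (hσ : σ = 1 ∨ σ = -1)
    (B α : ℝ) (hB : B = a / (1 + κ)) (hα : α = κ + σ * s)
    (f : ℝ → ℝ)
    (hf : f = fun x : ℝ => x - ((κ + 1) / (2 * a)) * (-κ + σ * s))
    (x : ℝ) :
    x ^ 2 * deriv (deriv f) x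
      + 2 * (B * x ^ 2 + κ * x + Real.sqrt (2 * d)) * deriv f x
      - 2 * B * x * f x
    = α * f x := by
  have hκ1' : 1 + κ ≠ 0 := by rwa [add_comm]
  have hB0 : B ≠ 0 := hB ▸ div_ne_zero ha hκ1'
  have hs2 : s ^ 2 = κ ^ 2 - 4 * B * √(2 * d) := by
    rw [hs, sq_sqrt hnonneg, hB, add_comm 1 κ]
    ring
  have hσ2 : σ ^ 2 = 1 := by rcases hσ with rfl | rfl <;> norm_num
  have hshift : f = fun y => y + (κ - σ * s) / (2 * B) := by
    rw [hf, hB]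
    funext y
    field_simp
    ring
  subst hα
  rw [hshift]
  exact stackelOp_eigen_of_sq_eq hB0 hs2 hσ2 x

/-- n = 1 QES sector of the inverse quartic power potential: the
Stäckel-transformed operator has eigenvalues `α = κ ± s` with
`s = √(κ² - 4a√(2d)/(κ+1))`, `κ = 1 + c/√(2d)`, `B = a/(1+κ)`, and linear
polynomial eigenfunctions. -/
theorem inverse_quartic_n1 (d a c : ℝ) (hd : 0 < d) (ha : a ≠ 0)
    (κ : ℝ) (hκ : κ = 1 + c / Real.sqrt (2 * d)) (hκ1 : κ + 1 ≠ 0)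
    (hnonneg : 0 ≤ κ ^ 2 - 4 * a * Real.sqrt (2 * d) / (κ + 1))
    (s : ℝ) (hs : s = Real.sqrt (κ ^ 2 - 4 * a * Real.sqrt (2 * d) / (κ + 1)))
    (σ : ℝ) (hσ : σ = 1 ∨ σ = -1)
    (B α : ℝ) (hB : B = a / (1 + κ)) (hα : α = κ + σ * s)
    (f : ℝ → ℝ)
    (hf : f = fun x : ℝ => x - ((κ + 1) / (2 * a)) * (-κ + σ * s))
    (x : ℝ) :
    x ^ 2 * deriv (deriv f) x
      + 2 * (B * x ^ 2 + κ * x + Real.sqrt (2 * d)) * deriv f x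
      - 2 * B * x * f x
    = α * f x :=
  inverse_quartic_n1_general d a ha κ hκ1 hnonneg s hs σ hσ B α hB hα f hf x
end

section
/- Let d > 0, ω ≠ 0 and c real, set κ = 1 + c/(2√(2d)) and s = √(κ² + ω√(2d)) (assuming κ² + ω√(2d) ≥ 0). For σ ∈ {+1, −1}, define α = κ − σ·s and f(z) = z − (κ + σ·s)/ω. Then for every z ∈ ℝ, z²·f″(z) + ((c/√(2d) + 2)·z + √(2d) − ω z²)·f′(z) + ω·z·f(z) = α·f(z). -/
/-!
For a linear trial function `f z = z - β` the second-derivative term vanishes and the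
`ω z²` terms cancel, so the operator maps `f` to `(a - ωβ) f` up to the constant
`-(ωβ² - aβ - b)`. Thus `f` is an eigenfunction exactly when `β` is a root of
`ωβ² - aβ - b`; for `a = 2κ`, `b = √(2d)` these roots are `(κ ± s)/ω`, and the
eigenvalue is `2κ - (κ ± s) = κ ∓ s`.
-/

open Real

noncomputable def stackelOperator (a b ω : ℝ) (f : ℝ → ℝ) (z : ℝ) : ℝ :=
  z ^ 2 * deriv (deriv f) z + (a * z + b - ω * z ^ 2) * deriv f z + ω * z * f z

theorem stackelOperator_sub_const (a b ω β z : ℝ) :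
    stackelOperator a b ω (fun z => z - β) z
      = (a - ω * β) * (z - β) - (ω * β ^ 2 - a * β - b) := by
  have hderiv : deriv (fun z : ℝ => z - β) = fun _ => 1 := by
    funext x
    simp
  simp only [stackelOperator, hderiv, deriv_const]
  ring

theorem stackelOperator_sub_root {a b ω β : ℝ} (hβ : ω * β ^ 2 - a * β - b = 0) (z : ℝ) :
    stackelOperator a b ω (fun z => z - β) z = (a - ω * β) * (z - β) := by
  rw [stackelOperator_sub_const, hβ, sub_zero]

theorem quadratic_root_of_sq_eq {ω κ r s σ : ℝ} (hω : ω ≠ 0)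
    (hs : s ^ 2 = κ ^ 2 + ω * r) (hσ : σ ^ 2 = 1) :
    ω * ((κ + σ * s) / ω) ^ 2 - 2 * κ * ((κ + σ * s) / ω) - r = 0 := by
  field_simp
  linear_combination s ^ 2 * hσ + hs

theorem inverse_sextic_n1_general (d ω c : ℝ) (hω : ω ≠ 0)
    (κ : ℝ) (hκ : κ = 1 + c / (2 * Real.sqrt (2 * d)))
    (hnonneg : 0 ≤ κ ^ 2 + ω * Real.sqrt (2 * d))
    (s : ℝ) (hs : s = Real.sqrt (κ ^ 2 + ω * Real.sqrt (2 * d)))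
    (σ : ℝ) (hσ : σ = 1 ∨ σ = -1)
    (α : ℝ) (hα : α = κ - σ * s)
    (f : ℝ → ℝ) (hf : f = fun z : ℝ => z - (κ + σ * s) / ω)
    (z : ℝ) :
    z ^ 2 * deriv (deriv f) z
      + ((c / Real.sqrt (2 * d) + 2) * z + Real.sqrt (2 * d) - ω * z ^ 2) * deriv f z
      + ω * z * f z
    = α * f z := by
  have ha : c / √(2 * d) + 2 = 2 * κ := by
    rw [hκ, mul_comm 2, ← div_div]
    ring
  have hs2 : s ^ 2 = κ ^ 2 + ω * √(2 * d) := by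
    rw [hs, sq_sqrt hnonneg]
  have hσ2 : σ ^ 2 = 1 := by
    rcases hσ with rfl | rfl <;> norm_num
  have hαβ : 2 * κ - ω * ((κ + σ * s) / ω) = α := by
    rw [hα, mul_div_cancel₀ _ hω]
    ring
  rw [ha, hf, ← hαβ]
  exact stackelOperator_sub_root (quadratic_root_of_sq_eq hω hs2 hσ2) z

/-- n = 1 QES sector of the inverse sextic power potential: the
Stäckel-transformed operator has eigenvalues `α = κ - σs` with
`κ = 1 + c/(2√(2d))`, `s = √(κ² + ω√(2d))`, and linear polynomial
eigenfunctions `f(z) = z - (κ + σs)/ω`. -/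
theorem inverse_sextic_n1 (d ω c : ℝ) (hd : 0 < d) (hω : ω ≠ 0)
    (κ : ℝ) (hκ : κ = 1 + c / (2 * Real.sqrt (2 * d)))
    (hnonneg : 0 ≤ κ ^ 2 + ω * Real.sqrt (2 * d))
    (s : ℝ) (hs : s = Real.sqrt (κ ^ 2 + ω * Real.sqrt (2 * d)))
    (σ : ℝ) (hσ : σ = 1 ∨ σ = -1)
    (α : ℝ) (hα : α = κ - σ * s)
    (f : ℝ → ℝ) (hf : f = fun z : ℝ => z - (κ + σ * s) / ω)
    (z : ℝ) :
    z ^ 2 * deriv (deriv f) z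
      + ((c / Real.sqrt (2 * d) + 2) * z + Real.sqrt (2 * d) - ω * z ^ 2) * deriv f z
      + ω * z * f z
    = α * f z :=
  inverse_sextic_n1_general d ω c hω κ hκ hnonneg s hs σ hσ α hα f hf z
end
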